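/- Range of improving shrinkage coefficients: suppose V + B(μ) > 0 for a given μ ∈ ℝ. Then for every α with 0 < α < 2V/(V + B(μ)), the shrunk estimator k̃(ω,w) = α·μ + (1−α)·Ĥ(ω,w) satisfies R(k̃) < R(Ĥ). -/

import Mathlib

/-!
Since `k̃ - T = (1 - α) (Ĥ - T) + α (μ - T)` and `Ĥ(ω, ·)` has mean `T ω`, the bias-variance
decomposition in `w` gives `R(k̃) = (1 - α)² V + α² B` and `R(Ĥ) = V`. The difference
`R(k̃) - R(Ĥ) = α (α (V + B) - 2 V)` is negative exactly for `0 < α < 2V / (V + B)`.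
-/

open MeasureTheory ProbabilityTheory

section BiasVariance

variable {Ω : Type*} [MeasurableSpace Ω] {P : Measure Ω} [IsProbabilityMeasure P] {X : Ω → ℝ}

theorem integral_sub_const_sq_eq_variance_add (hX : MemLp X 2 P) (c : ℝ) :
    ∫ ω, (X ω - c) ^ 2 ∂P = variance X P + (P[X] - c) ^ 2 := by
  have hXc : MemLp (fun ω => X ω - c) 2 P := hX.sub (memLp_const c)
  have hmean : P[fun ω => X ω - c] = P[X] - c := by
    rw [integral_sub (hX.integrable one_le_two) (integrable_const c)]
    simp
  rw [← variance_sub_const hX.aestronglyMeasurable c, variance_eq_sub hXc, hmean]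
  simp [Pi.pow_apply]

theorem integral_shrink_sub_integral_sq (hX : MemLp X 2 P) (α c : ℝ) :
    ∫ ω, (α * c + (1 - α) * X ω - P[X]) ^ 2 ∂P
      = (1 - α) ^ 2 * variance X P + α ^ 2 * (c - P[X]) ^ 2 := by
  have hY : MemLp (fun ω => α * c + (1 - α) * X ω) 2 P :=
    (memLp_const (α * c)).add (hX.const_mul (1 - α))
  have hvar : variance (fun ω => α * c + (1 - α) * X ω) P = (1 - α) ^ 2 * variance X P := by
    rw [variance_const_add (hX.aestronglyMeasurable.const_mul _), variance_const_mul]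
  have hmean : P[fun ω => α * c + (1 - α) * X ω] = α * c + (1 - α) * P[X] := by
    rw [integral_add (integrable_const _) ((hX.integrable one_le_two).const_mul _)]
    simp [integral_const_mul]
  rw [integral_sub_const_sq_eq_variance_add hY, hvar, hmean]
  ring

end BiasVariance

theorem MeasureTheory.MemLp.ae_memLp_prodMk_left {α β : Type*}
    [MeasurableSpace α] [MeasurableSpace β] {μ : Measure α} {ν : Measure β} [SFinite μ] [SFinite ν]
    {f : α × β → ℝ} (hf : MemLp f 2 (μ.prod ν)) :
    ∀ᵐ x ∂μ, MemLp (fun y => f (x, y)) 2 ν := by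
  filter_upwards [hf.aestronglyMeasurable.prodMk_left, hf.integrable_sq.prod_right_ae]
    with x hmeas hsq
  exact (memLp_two_iff_integrable_sq hmeas).mpr hsq

section Shrinkage

variable {Ω W : Type*} [MeasurableSpace Ω] [MeasurableSpace W]
  {P : Measure Ω} {Q : Measure W} {T : Ω → ℝ} {H : Ω → W → ℝ}

theorem integrable_variance_of_memLp_prod [SFinite P] [IsFiniteMeasure Q] (hT : MemLp T 2 P)
    (hH : MemLp (fun p : Ω × W => H p.1 p.2) 2 (P.prod Q))
    (hUnbiased : ∀ᵐ ω ∂P, ∫ w, H ω w ∂Q = T ω) :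
    Integrable (fun ω => variance (fun w => H ω w) Q) P := by
  have hsq : Integrable (fun p : Ω × W => (H p.1 p.2 - T p.1) ^ 2) (P.prod Q) :=
    (hH.sub (hT.comp_fst Q)).integrable_sq
  refine hsq.integral_prod_left.congr ?_
  filter_upwards [hH.ae_memLp_prodMk_left, hUnbiased] with ω hω hmean
  rw [variance_eq_integral hω.aestronglyMeasurable.aemeasurable, hmean]

theorem integral_integral_shrink_sub_sq [IsFiniteMeasure P] [IsProbabilityMeasure Q]
    (hT : MemLp T 2 P)
    (hH : MemLp (fun p : Ω × W => H p.1 p.2) 2 (P.prod Q))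
    (hUnbiased : ∀ᵐ ω ∂P, ∫ w, H ω w ∂Q = T ω) (α μ : ℝ) :
    ∫ ω, ∫ w, (α * μ + (1 - α) * H ω w - T ω) ^ 2 ∂Q ∂P
      = (1 - α) ^ 2 * ∫ ω, variance (fun w => H ω w) Q ∂P
        + α ^ 2 * ∫ ω, (μ - T ω) ^ 2 ∂P := by
  have hinner : ∀ᵐ ω ∂P, ∫ w, (α * μ + (1 - α) * H ω w - T ω) ^ 2 ∂Q
      = (1 - α) ^ 2 * variance (fun w => H ω w) Q + α ^ 2 * (μ - T ω) ^ 2 := by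
    filter_upwards [hH.ae_memLp_prodMk_left, hUnbiased] with ω hω hmean
    rw [← hmean]
    exact integral_shrink_sub_integral_sq hω α μ
  have hbias : Integrable (fun ω => (μ - T ω) ^ 2) P :=
    ((memLp_const μ).sub hT).integrable_sq
  rw [integral_congr_ae hinner,
    integral_add ((integrable_variance_of_memLp_prod hT hH hUnbiased).const_mul _)
      (hbias.const_mul _),
    integral_const_mul, integral_const_mul]

end Shrinkage

theorem one_sub_sq_mul_add_sq_mul_lt {V B α : ℝ} (hPos : 0 < V + B) (hα : 0 < α)
    (hα' : α < 2 * V / (V + B)) :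
    (1 - α) ^ 2 * V + α ^ 2 * B < V := by
  have hdiff : (1 - α) ^ 2 * V + α ^ 2 * B - V = α * (α * (V + B) - 2 * V) := by ring
  have hneg : α * (α * (V + B) - 2 * V) < 0 :=
    mul_neg_of_pos_of_neg hα (sub_neg.mpr ((lt_div_iff₀ hPos).mp hα'))
  linarith

/-- **Range of improving shrinkage coefficients.**
Suppose `V + B μ > 0` for a given `μ ∈ ℝ`.  Then for every `α` with
`0 < α < 2V / (V + B μ)`, the shrunk estimator
`k̃ (ω, w) = α • μ + (1 - α) • H (ω, w)` satisfies `R k̃ < R H`. -/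
theorem shrinkage_improvement_range
    {Ω W : Type*} [MeasurableSpace Ω] [MeasurableSpace W]
    (P : Measure Ω) (Q : Measure W) [IsProbabilityMeasure P] [IsProbabilityMeasure Q]
    (T : Ω → ℝ) (H : Ω → W → ℝ)
    (hT : MemLp T 2 P)
    (hH : MemLp (fun p : Ω × W => H p.1 p.2) 2 (P.prod Q))
    (hUnbiased : ∀ᵐ ω ∂P, ∫ w, H ω w ∂Q = T ω)
    (R : (Ω → W → ℝ) → ℝ)
    (hR : ∀ g : Ω → W → ℝ, R g = ∫ ω, ∫ w, (g ω w - T ω) ^ 2 ∂Q ∂P)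
    (V : ℝ)
    (hV : V = ∫ ω, variance (fun w => H ω w) Q ∂P)
    (μ : ℝ) (B : ℝ)
    (hB : B = ∫ ω, (μ - T ω) ^ 2 ∂P)
    (hPos : 0 < V + B) :
    ∀ α : ℝ, 0 < α → α < 2 * V / (V + B) →
      R (fun ω w => α * μ + (1 - α) * H ω w) < R H := by
  intro α hα hα'
  have hRshrunk : R (fun ω w => α * μ + (1 - α) * H ω w) = (1 - α) ^ 2 * V + α ^ 2 * B := by
    rw [hR, hV, hB, integral_integral_shrink_sub_sq hT hH hUnbiased]
  have hRH : R H = V := by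
    simpa [← hR, ← hV] using integral_integral_shrink_sub_sq hT hH hUnbiased 0 μ
  rw [hRshrunk, hRH]
  exact one_sub_sq_mul_add_sq_mul_lt hPos hα hα'
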